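/- arXiv:2410.07634 — 2 statements merged into one kernel-verified Lean document; each statement's English description precedes it below -/
import Mathlib

section
/- Let s ≥ 2 and t ≥ 2 be integers, let r be a positive integer, and let n = 3(s−1)·s^{2t}·t^{2t}·r. Then every coloring of the edges of the complete bipartite graph K_{n,n} with r colors contains a monochromatic copy of K_{s,t} or a rainbow copy of K_{s,t}. -/
/-!
If some colour is heavy (more than `β ≈ n / (s²t²)` edges at a vertex) at more than
`K = (s-1)(s²t²)^t` vertices of one side, the Kővári–Sós–Turán double count over `t`-sets of
neighbours yields a monochromatic `K_{s,t}`. Otherwise at least `2Kr` vertices on each side are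
light in every colour. Choose `t` light columns one at a time, each one repeating an earlier colour
in few light rows (it exists by averaging, since a light row repeats a given colour at most `β`
times). The surviving rows see `t` distinct colours on these columns, and because the columns are
light too, each of them shares a colour with at most `t²β` others; a greedy choice of `s` pairwise
colour-disjoint rows then gives a rainbow `K_{s,t}`.
-/

/-- The coloring `c` of the edges of `K_{n₁,n₂}` contains a monochromatic copy of `K_{s,t}`
with the `s`-side in the first part and the `t`-side in the second part. -/
def HasMonoKst {n₁ n₂ r : ℕ} (c : Fin n₁ × Fin n₂ → Fin r) (s t : ℕ) : Prop :=
  ∃ (A : Finset (Fin n₁)) (B : Finset (Fin n₂)), A.card = s ∧ B.card = t ∧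
    ∀ a ∈ A, ∀ b ∈ B, ∀ a' ∈ A, ∀ b' ∈ B, c (a, b) = c (a', b')

/-- The coloring `c` of the edges of `K_{n₁,n₂}` contains a rainbow copy of `K_{s,t}`
with the `s`-side in the first part and the `t`-side in the second part. -/
def HasRainbowKst {n₁ n₂ r : ℕ} (c : Fin n₁ × Fin n₂ → Fin r) (s t : ℕ) : Prop :=
  ∃ (A : Finset (Fin n₁)) (B : Finset (Fin n₂)), A.card = s ∧ B.card = t ∧
    ∀ a ∈ A, ∀ b ∈ B, ∀ a' ∈ A, ∀ b' ∈ B, (a, b) ≠ (a', b') → c (a, b) ≠ c (a', b')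

open Finset Function

theorem Finset.exists_biclique_of_mul_pow_lt {α β : Type*} [Fintype β] [DecidableEq β]
    (H : Finset α) (N : α → Finset β) (s t m : ℕ) (hN : ∀ u ∈ H, m ≤ #(N u))
    (h : (s - 1) * Fintype.card β ^ t < #H * (m + 1 - t) ^ t) :
    ∃ A ⊆ H, ∃ B : Finset β, #A = s ∧ #B = t ∧ ∀ a ∈ A, B ⊆ N a := by
  classical
  set S := H.sigma fun u => (N u).powersetCard t
  have hS : #H * m.choose t ≤ #S := by
    rw [card_sigma, ← smul_eq_mul, ← sum_const]
    refine sum_le_sum fun u hu => ?_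
    rw [card_powersetCard]
    exact Nat.choose_le_choose t (hN u hu)
  have hcount : #((univ : Finset β).powersetCard t) * (s - 1) < #S := by
    refine lt_of_mul_lt_mul_left (a := t.factorial) ?_ (Nat.zero_le _)
    calc t.factorial * (#((univ : Finset β).powersetCard t) * (s - 1))
        = (s - 1) * (Fintype.card β).descFactorial t := by
          rw [card_powersetCard, card_univ, Nat.descFactorial_eq_factorial_mul_choose]; ring
      _ ≤ (s - 1) * Fintype.card β ^ t := Nat.mul_le_mul_left _ (Nat.descFactorial_le_pow _ _)
      _ < #H * (m + 1 - t) ^ t := h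
      _ ≤ #H * m.descFactorial t := Nat.mul_le_mul_left _ (Nat.pow_sub_le_descFactorial _ _)
      _ = t.factorial * (#H * m.choose t) := by
          rw [Nat.descFactorial_eq_factorial_mul_choose]; ring
      _ ≤ t.factorial * #S := Nat.mul_le_mul_left _ hS
  obtain ⟨B, hB, hfiber⟩ := exists_lt_card_fiber_of_mul_lt_card_of_maps_to (f := Sigma.snd)
    (fun p hp => by
      obtain ⟨-, hp⟩ := mem_sigma.1 hp
      exact powersetCard_mono (subset_univ _) hp) hcount
  set F := {p ∈ S | p.2 = B}
  have hinj : Set.InjOn Sigma.fst (F : Set (Σ _ : α, Finset β)) := by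
    rintro ⟨u, B₁⟩ h₁ ⟨u', B₂⟩ h₂ (rfl : u = u')
    obtain ⟨-, rfl : B₁ = B⟩ := mem_filter.1 h₁
    obtain ⟨-, rfl : B₂ = B₁⟩ := mem_filter.1 h₂
    rfl
  obtain ⟨A, hAF, hA⟩ := exists_subset_card_eq (s := F.image Sigma.fst) (n := s)
    (by rw [card_image_of_injOn hinj]; omega)
  have hA_mem : ∀ a ∈ A, a ∈ H ∧ B ⊆ N a := fun a ha => by
    obtain ⟨⟨u, B'⟩, hp, rfl⟩ := mem_image.1 (hAF ha)
    obtain ⟨hpS, rfl : B' = B⟩ := mem_filter.1 hp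
    exact mem_sigma.1 hpS |>.imp id fun hB' => (mem_powersetCard.1 hB').1
  exact ⟨A, fun a ha => (hA_mem a ha).1, B, hA, (mem_powersetCard.1 hB).2,
    fun a ha => (hA_mem a ha).2⟩

theorem Fin.injective_comp_cons_iff {α γ : Type*} {t : ℕ} (g : α → γ) (x : α) (f : Fin t → α) :
    Injective (g ∘ Fin.cons x f) ↔ (∀ i, g x ≠ g (f i)) ∧ Injective (g ∘ f) := by
  simp [Fin.comp_cons, Fin.cons_injective_iff, eq_comm]

theorem Finset.card_filter_exists_le {ι α : Type*} [Fintype ι] [DecidableEq α] (s : Finset α)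
    (p : ι → α → Prop) [∀ i, DecidablePred (p i)] [DecidablePred fun x => ∃ i, p i x] :
    #{x ∈ s | ∃ i, p i x} ≤ ∑ i, #{x ∈ s | p i x} :=
  calc #{x ∈ s | ∃ i, p i x}
      ≤ #(univ.biUnion fun i => {x ∈ s | p i x}) := card_le_card fun x hx => by simpa using hx
    _ ≤ ∑ i, #{x ∈ s | p i x} := card_biUnion_le

theorem Finset.exists_subset_card_eq_pairwise_of_card_filter_le {α : Type*} [DecidableEq α]
    {p : α → α → Prop} [DecidableRel p] (hp : ∀ x y, p x y → p y x) (d : ℕ) (s : ℕ) (R : Finset α)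
    (hd : ∀ x ∈ R, #{y ∈ R | p x y} ≤ d) (hR : (s - 1) * (d + 1) < #R) :
    ∃ A ⊆ R, #A = s ∧ (A : Set α).Pairwise fun x y => ¬ p x y := by
  induction s generalizing R with
  | zero => exact ⟨∅, empty_subset _, rfl, by simp⟩
  | succ s ih =>
    obtain ⟨x, hx⟩ : R.Nonempty := card_pos.1 (by omega)
    set R' := {y ∈ R | ¬ p x y}.erase x
    have hR'R : R' ⊆ R := (erase_subset _ _).trans (filter_subset _ _)
    have hR' : #R ≤ #R' + (d + 1) := by
      have h₁ : #{y ∈ R | p x y} + #{y ∈ R | ¬ p x y} = #R := card_filter_add_card_filter_not _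
      have h₂ : #{y ∈ R | ¬ p x y} - 1 ≤ #R' := pred_card_le_card_erase
      have := hd x hx
      omega
    obtain ⟨A, hAR', hA, hApw⟩ : ∃ A ⊆ R', #A = s ∧ (A : Set α).Pairwise fun x y => ¬ p x y := by
      rcases s with _ | s
      · exact ⟨∅, empty_subset _, rfl, by simp⟩
      · exact ih R'
          (fun y hy => (card_le_card (filter_subset_filter _ hR'R)).trans (hd y (hR'R hy)))
          (by rw [Nat.add_sub_cancel] at hR ⊢; rw [add_one_mul] at hR; omega)
    have hxA : x ∉ A := fun h => by simpa [R'] using hAR' h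
    refine ⟨insert x A, insert_subset hx (hAR'.trans hR'R),
      by rw [card_insert_of_notMem hxA, hA], ?_⟩
    rw [coe_insert, Set.pairwise_insert]
    refine ⟨hApw, fun y hy _ => ?_⟩
    have hxy : ¬ p x y := by simpa [R'] using (mem_filter.1 (mem_of_mem_erase (hAR' hy))).2
    exact ⟨hxy, fun h => hxy (hp y x h)⟩

section Coloring

variable {m n r : ℕ} (c : Fin m × Fin n → Fin r)

def colorDegree (u : Fin m) (q : Fin r) : ℕ := #{v | c (u, v) = q}

theorem HasMonoKst.of_comp_swap {s t : ℕ} (h : HasMonoKst (c ∘ Prod.swap) s t) :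
    HasMonoKst c t s := by
  obtain ⟨A, B, hA, hB, hAB⟩ := h
  exact ⟨B, A, hB, hA, fun a ha b hb a' ha' b' hb' => hAB b hb a ha b' hb' a' ha'⟩

theorem hasMonoKst_of_mul_pow_lt (s t k : ℕ) (q : Fin r)
    (h : (s - 1) * n ^ t < #{u | k ≤ colorDegree c u q} * (k + 1 - t) ^ t) :
    HasMonoKst c s t := by
  obtain ⟨A, -, B, hA, hB, hAB⟩ := exists_biclique_of_mul_pow_lt {u | k ≤ colorDegree c u q}
    (fun u => {v | c (u, v) = q}) s t k (fun u hu => (mem_filter.1 hu).2) (by simpa using h)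
  refine ⟨A, B, hA, hB, fun a ha b hb a' ha' b' hb' => ?_⟩
  rw [(mem_filter.1 (hAB a ha hb)).2, (mem_filter.1 (hAB a' ha' hb')).2]

theorem sub_mul_le_card_forall_colorDegree_le (β K : ℕ)
    (h : ∀ q, #{u | β < colorDegree c u q} ≤ K) :
    m - r * K ≤ #{u | ∀ q, colorDegree c u q ≤ β} := by
  have hheavy : #{u | ∃ q, β < colorDegree c u q} ≤ r * K := calc
    _ ≤ ∑ q, #{u | β < colorDegree c u q} :=
      card_filter_exists_le univ fun q u => β < colorDegree c u q
    _ ≤ ∑ _q : Fin r, K := sum_le_sum fun q _ => h q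
    _ = r * K := by simp
  have hsplit := card_filter_add_card_filter_not (s := univ) fun u => ∀ q, colorDegree c u q ≤ β
  simp only [not_forall, not_le, card_univ, Fintype.card_fin] at hsplit
  omega

theorem exists_tuple_many_rows_injective_colors (β L : ℕ) (R : Finset (Fin m)) (C : Finset (Fin n))
    (hR : ∀ u ∈ R, ∀ q, colorDegree c u q ≤ β) (hRC : #R * β ≤ #C * L) (hC : C.Nonempty)
    (t : ℕ) : ∃ b : Fin t → Fin n, (∀ i, b i ∈ C) ∧
      #R ≤ #{u ∈ R | Injective fun i => c (u, b i)} + L * ∑ j ∈ range t, j := by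
  induction t with
  | zero => exact ⟨Fin.elim0, Fin.rec0, by simp [injective_of_subsingleton]⟩
  | succ t ih =>
    obtain ⟨b, hbC, hb⟩ := ih
    set RS := {u ∈ R | Injective fun i => c (u, b i)}
    have hrow : ∀ u ∈ RS, #{v ∈ C | ∃ i, c (u, v) = c (u, b i)} ≤ t * β := fun u hu => calc
      _ ≤ ∑ i, #{v ∈ C | c (u, v) = c (u, b i)} :=
          card_filter_exists_le C fun i v => c (u, v) = c (u, b i)
      _ ≤ ∑ _i : Fin t, β := sum_le_sum fun i _ =>
          (card_le_card (filter_subset_filter _ (subset_univ C))).trans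
            (hR u (mem_filter.1 hu).1 _)
      _ = t * β := by simp
    have hsum : ∑ v ∈ C, #{u ∈ RS | ∃ i, c (u, v) = c (u, b i)} ≤ ∑ _v ∈ C, t * L := calc
      _ = ∑ u ∈ RS, #{v ∈ C | ∃ i, c (u, v) = c (u, b i)} :=
          (sum_card_bipartiteAbove_eq_sum_card_bipartiteBelow _).symm
      _ ≤ ∑ _u ∈ RS, t * β := sum_le_sum hrow
      _ ≤ #R * β * t := by
          rw [sum_const, smul_eq_mul, mul_comm t, ← mul_assoc]
          exact Nat.mul_le_mul_right _ (Nat.mul_le_mul_right _ (card_filter_le _ _))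
      _ ≤ #C * L * t := Nat.mul_le_mul_right t hRC
      _ = ∑ _v ∈ C, t * L := by rw [sum_const, smul_eq_mul]; ring
    obtain ⟨v, hvC, hv⟩ := exists_le_of_sum_le hC hsum
    refine ⟨Fin.cons v b, Fin.cases hvC hbC, ?_⟩
    have hsub : RS \ {u ∈ RS | ∃ i, c (u, v) = c (u, b i)} ⊆
        {u ∈ R | Injective fun i => c (u, (Fin.cons v b : Fin (t + 1) → Fin n) i)} := by
      intro u hu
      simp only [mem_sdiff, mem_filter, RS] at hu
      exact mem_filter.2 ⟨hu.1.1, (Fin.injective_comp_cons_iff (fun v => c (u, v)) v b).2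
        ⟨fun i h => hu.2 ⟨hu.1, i, h⟩, hu.1.2⟩⟩
    have hlost :=
      card_sdiff_add_card_eq_card (filter_subset (fun u => ∃ i, c (u, v) = c (u, b i)) RS)
    have := card_le_card hsub
    rw [sum_range_succ, mul_add, mul_comm L t]
    omega

theorem hasRainbowKst_of_injective_colors (s t β : ℕ) (b : Fin t → Fin n)
    (hb : ∀ k q, colorDegree (c ∘ Prod.swap) (b k) q ≤ β) (R : Finset (Fin m))
    (hR : ∀ u ∈ R, Injective fun k => c (u, b k)) (hcard : (s - 1) * (t * (t * β) + 1) < #R) :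
    HasRainbowKst c s t := by
  let Clash : Fin m → Fin m → Prop := fun u u' => ∃ k k', c (u', b k) = c (u, b k')
  have hClash : ∀ u ∈ R, #{u' ∈ R | Clash u u'} ≤ t * (t * β) := fun u _ => calc
    _ ≤ ∑ k, #{u' ∈ R | ∃ k', c (u', b k) = c (u, b k')} :=
        card_filter_exists_le R fun k u' => ∃ k', c (u', b k) = c (u, b k')
    _ ≤ ∑ k, ∑ k', #{u' ∈ R | c (u', b k) = c (u, b k')} :=
        sum_le_sum fun k _ => card_filter_exists_le R fun k' u' => c (u', b k) = c (u, b k')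
    _ ≤ ∑ _k : Fin t, ∑ _k' : Fin t, β := sum_le_sum fun k _ => sum_le_sum fun k' _ =>
        (card_le_card (filter_subset_filter _ (subset_univ R))).trans (hb k _)
    _ = t * (t * β) := by simp
  obtain ⟨A, hAR, hA, hApw⟩ := exists_subset_card_eq_pairwise_of_card_filter_le
    (p := Clash) (fun u u' ⟨k, k', h⟩ => ⟨k', k, h.symm⟩) _ s R hClash hcard
  obtain ⟨u₀, hu₀⟩ : R.Nonempty := card_pos.1 (by omega)
  refine ⟨A, univ.image b, hA, by
    rw [card_image_of_injective _ (Injective.of_comp (f := fun v => c (u₀, v)) (hR u₀ hu₀)),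
      card_univ, Fintype.card_fin], ?_⟩
  simp only [mem_image, mem_univ, true_and]
  rintro a ha _ ⟨k, rfl⟩ a' ha' _ ⟨k', rfl⟩ hne
  by_cases haa' : a = a'
  · subst haa'
    exact fun h => hne (by rw [hR a (hAR ha) h])
  · exact fun h => hApw ha ha' haa' ⟨k', k, h.symm⟩

theorem hasRainbowKst_of_colorDegree_le (s t β L : ℕ) (R : Finset (Fin m)) (C : Finset (Fin n))
    (hR : ∀ u ∈ R, ∀ q, colorDegree c u q ≤ β)
    (hC : ∀ v ∈ C, ∀ q, colorDegree (c ∘ Prod.swap) v q ≤ β)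
    (hRC : #R * β ≤ #C * L) (hC₀ : C.Nonempty)
    (hcard : (s - 1) * (t * (t * β) + 1) + L * ∑ j ∈ range t, j < #R) :
    HasRainbowKst c s t := by
  obtain ⟨b, hbC, hb⟩ := exists_tuple_many_rows_injective_colors c β L R C hR hRC hC₀ t
  exact hasRainbowKst_of_injective_colors c s t β b (fun k => hC _ (hbC k))
    {u ∈ R | Injective fun i => c (u, b i)} (fun u hu => (mem_filter.1 hu).2) (by omega)

end Coloring

theorem hasMonoKst_or_hasRainbowKst {n r : ℕ} (c : Fin n × Fin n → Fin r) (s t K β : ℕ)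
    (hmono : (s - 1) * n ^ t < (K + 1) * (β + 2 - t) ^ t) (hK : 2 * (r * K) ≤ n)
    (hrainbow : (s - 1) * (t * (t * β) + 1) + β * (t * (t - 1)) + r * K < n) :
    (HasMonoKst c s t ∨ HasMonoKst c t s) ∨ HasRainbowKst c s t := by
  have hheavy : ∀ H, K < H → (s - 1) * n ^ t < H * (β + 1 + 1 - t) ^ t := fun H hH =>
    hmono.trans_le (Nat.mul_le_mul_right _ hH)
  by_cases hrow : ∃ q, K < #{u | β < colorDegree c u q}
  · obtain ⟨q, hq⟩ := hrow
    exact Or.inl (Or.inl (hasMonoKst_of_mul_pow_lt c s t _ q (hheavy _ hq)))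
  by_cases hcol : ∃ q, K < #{v | β < colorDegree (c ∘ Prod.swap) v q}
  · obtain ⟨q, hq⟩ := hcol
    exact Or.inl (Or.inr (hasMonoKst_of_mul_pow_lt _ s t _ q (hheavy _ hq)).of_comp_swap)
  push Not at hrow hcol
  set R : Finset (Fin n) := {u | ∀ q, colorDegree c u q ≤ β}
  set C : Finset (Fin n) := {v | ∀ q, colorDegree (c ∘ Prod.swap) v q ≤ β}
  have hR : n - r * K ≤ #R := sub_mul_le_card_forall_colorDegree_le c β K hrow
  have hC : n - r * K ≤ #C := sub_mul_le_card_forall_colorDegree_le _ β K hcol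
  have hRn : #R ≤ n := card_le_univ R |>.trans_eq (Fintype.card_fin n)
  have hsum := sum_range_id_mul_two t
  refine Or.inr (hasRainbowKst_of_colorDegree_le c s t β (2 * β) R C
    (fun u hu => (mem_filter.1 hu).2) (fun v hv => (mem_filter.1 hv).2) ?_ ?_ ?_)
  · calc #R * β ≤ n * β := Nat.mul_le_mul_right _ hRn
      _ ≤ 2 * #C * β := Nat.mul_le_mul_right _ (by omega)
      _ = #C * (2 * β) := by ring
  · exact card_pos.1 (by omega)
  · calc _ = (s - 1) * (t * (t * β) + 1) + β * (t * (t - 1)) := by rw [← hsum]; ring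
      _ < #R := by omega

theorem sub_one_mul_add_mul_add_lt_three_mul {s t D X : ℕ} (hs : 2 ≤ s)
    (hD : s ^ 2 * t ^ 2 * D = 3 * X) (hX : s ^ 2 * t ^ 3 + s ^ 2 < X) :
    (s - 1) * (t * (t * (D + t)) + 1) + (D + t) * (t * (t - 1)) + X < 3 * X := by
  have h₁ : (s - 1) * (t * (t * (D + t)) + 1) + (D + t) * (t * (t - 1)) ≤
      s * (t * (t * (D + t))) + s := by
    obtain ⟨a, rfl⟩ : ∃ a, s = a + 1 := ⟨s - 1, by omega⟩
    have : (D + t) * (t * (t - 1)) ≤ t * (t * (D + t)) := by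
      rw [mul_comm, ← mul_assoc]
      exact Nat.mul_le_mul_right _ (Nat.mul_le_mul_left _ (Nat.sub_le t 1))
    simp only [Nat.add_sub_cancel]
    nlinarith
  have h₂ : s * (s * (t * (t * (D + t))) + s) < s * (2 * X) := by nlinarith
  have := Nat.lt_of_mul_lt_mul_left h₂
  omega

/-- For integers `s, t ≥ 2`, a positive integer `r`, and `n = 3(s-1)·s^(2t)·t^(2t)·r`,
every `r`-coloring of `K_{n,n}` contains a monochromatic or rainbow copy of `K_{s,t}`
(in either orientation). -/
theorem bipartite_gallai_ramsey_explicit (s t r n : ℕ) (hs : 2 ≤ s) (ht : 2 ≤ t) (hr : 0 < r)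
    (hn : n = 3 * (s - 1) * s ^ (2 * t) * t ^ (2 * t) * r)
    (c : Fin n × Fin n → Fin r) :
    (HasMonoKst c s t ∨ HasMonoKst c t s) ∨
    (HasRainbowKst c s t ∨ HasRainbowKst c t s) := by
  obtain ⟨P, hP⟩ : ∃ P, P = s ^ 2 * t ^ 2 := ⟨_, rfl⟩
  have hn' : n = 3 * (s - 1) * P ^ t * r := by rw [hn, hP, mul_pow, ← pow_mul, ← pow_mul]; ring
  set K := (s - 1) * P ^ t
  set D := 3 * (s - 1) * P ^ (t - 1) * r
  have hnK : n = 3 * (r * K) := by rw [hn']; ring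
  have hnD : n = P * D := by rw [hn', ← Nat.sub_add_cancel (show 1 ≤ t by omega), pow_succ]; ring
  have hrK : s ^ 2 * t ^ 3 + s ^ 2 < r * K := calc
    s ^ 2 * t ^ 3 + s ^ 2 < s ^ 2 * t ^ 3 * (s ^ 2 * t) := by
      have : 8 ≤ s ^ 2 * t := by nlinarith
      have : s ^ 2 ≤ s ^ 2 * t ^ 3 := Nat.le_mul_of_pos_right _ (by positivity)
      nlinarith
    _ = P ^ 2 := by rw [hP]; ring
    _ ≤ P ^ t := Nat.pow_le_pow_right (by rw [hP]; positivity) ht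
    _ ≤ r * K := (Nat.le_mul_of_pos_left _ (by omega)).trans (Nat.le_mul_of_pos_left _ hr)
  refine (hasMonoKst_or_hasRainbowKst c s t K (D + t) ?_ (by omega) ?_).imp_right Or.inl
  · rw [show D + t + 2 - t = D + 2 by omega]
    calc (s - 1) * n ^ t = K * D ^ t := by rw [hnD, mul_pow]; ring
      _ < (K + 1) * (D + 2) ^ t :=
          Nat.mul_lt_mul'' (Nat.lt_succ_self K) (Nat.pow_lt_pow_left (by omega) (by omega))
  · rw [hnK]
    exact sub_one_mul_add_mul_add_lt_three_mul hs (by rw [← hP, ← hnD, hnK]) hrK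
end

section
/- The following two assertions are equivalent: (1) for all Gallai-Ramsey configurations K₁ and K₂, the Cartesian product K₁∗K₂ is Gallai-Ramsey; (2) every Gallai-Ramsey configuration is Ramsey. -/
/-- `f` maps the configuration `K ⊆ E^m` to a congruent copy of itself in `E^d`: it preserves
all pairwise distances between points of `K` (hence is injective on `K`). -/
def IsCongruentCopy {m d : ℕ} (K : Set (EuclideanSpace ℝ (Fin m)))
    (f : EuclideanSpace ℝ (Fin m) → EuclideanSpace ℝ (Fin d)) : Prop :=
  ∀ x ∈ K, ∀ y ∈ K, dist (f x) (f y) = dist x y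

/-- The coloring `χ` of `E^d` contains a monochromatic congruent copy of `K ⊆ E^m`. -/
def HasMonoCopy {r m d : ℕ} (χ : EuclideanSpace ℝ (Fin d) → Fin r)
    (K : Set (EuclideanSpace ℝ (Fin m))) : Prop :=
  ∃ f, IsCongruentCopy K f ∧ ∃ col : Fin r, ∀ x ∈ K, χ (f x) = col

/-- The coloring `χ` of `E^d` contains a rainbow congruent copy of `K ⊆ E^m`. -/
def HasRainbowCopy {r m d : ℕ} (χ : EuclideanSpace ℝ (Fin d) → Fin r)
    (K : Set (EuclideanSpace ℝ (Fin m))) : Prop :=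
  ∃ f, IsCongruentCopy K f ∧ ∀ x ∈ K, ∀ y ∈ K, x ≠ y → χ (f x) ≠ χ (f y)

/-- The vertex set of a regular `(s-1)`-dimensional simplex with side length `a`, realized in
`E^s` as the set of points with exactly one nonzero coordinate, equal to `a/√2`. -/
def simplexVertices (s : ℕ) (a : ℝ) : Set (EuclideanSpace ℝ (Fin s)) :=
  Set.range fun i : Fin s => EuclideanSpace.single i (a / Real.sqrt 2)

/-- The Cartesian product `K₁ ∗ K₂ ⊆ E^{m₁+m₂}` of configurations `K₁ ⊆ E^{m₁}` and
`K₂ ⊆ E^{m₂}`. -/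
def cartesianProd {m₁ m₂ : ℕ} (K₁ : Set (EuclideanSpace ℝ (Fin m₁)))
    (K₂ : Set (EuclideanSpace ℝ (Fin m₂))) : Set (EuclideanSpace ℝ (Fin (m₁ + m₂))) :=
  {z | ∃ x ∈ K₁, ∃ y ∈ K₂,
    (∀ i : Fin m₁, z (Fin.castAdd m₂ i) = x i) ∧ (∀ j : Fin m₂, z (Fin.natAdd m₁ j) = y j)}

/-- A configuration `K ⊆ E^m` is Ramsey if for every positive number of colors `r` there is a
dimension `d` such that every `r`-coloring of `E^d` contains a monochromatic congruent copy
of `K`. -/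
def IsRamseyConfig {m : ℕ} (K : Set (EuclideanSpace ℝ (Fin m))) : Prop :=
  ∀ r : ℕ, 0 < r → ∃ d : ℕ, ∀ χ : EuclideanSpace ℝ (Fin d) → Fin r, HasMonoCopy χ K

/-- A configuration `K ⊆ E^m` is Gallai-Ramsey if for every positive number of colors `r`
there is a dimension `d` such that every `r`-coloring of `E^d` contains a monochromatic or a
rainbow congruent copy of `K`. -/
def IsGallaiRamseyConfig {m : ℕ} (K : Set (EuclideanSpace ℝ (Fin m))) : Prop :=
  ∀ r : ℕ, 0 < r → ∃ d : ℕ, ∀ χ : EuclideanSpace ℝ (Fin d) → Fin r,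
    HasMonoCopy χ K ∨ HasRainbowCopy χ K

/-!
Products of Ramsey configurations are Ramsey: by compactness, a dimension `d₂` that works for
`K₂` has a finite subset `Y` containing a monochromatic copy of `K₂` for every colouring, and `K₁`
is then applied to the colouring of `E^{d₁}` by the finitely many induced colourings of `Y`.
So if Gallai-Ramsey implies Ramsey, products of Gallai-Ramsey configurations are Gallai-Ramsey.
Conversely, for a Gallai-Ramsey `K` and `r` colours, multiply `K` by the regular simplex on
`r + 1` vertices, which is Ramsey by pigeonhole. The product has more than `r` points, so it has
no rainbow copy; a monochromatic copy of it contains one of `K`.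
-/

open Set

local notation "𝔼" n:max => EuclideanSpace ℝ (Fin n)

section Copies

variable {m n d r : ℕ} {K : Set (𝔼 m)}

lemma Isometry.isCongruentCopy {f : 𝔼 m → 𝔼 d} (hf : Isometry f) : IsCongruentCopy K f :=
  fun x _ y _ => hf.dist_eq x y

lemma HasMonoCopy.of_isCongruentCopy {χ : 𝔼 d → Fin r} {L : Set (𝔼 n)} {g : 𝔼 m → 𝔼 n}
    (hg : IsCongruentCopy K g) (hKL : MapsTo g K L) (h : HasMonoCopy χ L) : HasMonoCopy χ K := by
  obtain ⟨f, hf, col, hcol⟩ := h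
  exact ⟨f ∘ g, fun x hx y hy => (hf _ (hKL hx) _ (hKL hy)).trans (hg x hx y hy), col,
    fun x hx => hcol _ (hKL hx)⟩

lemma HasRainbowCopy.encard_le {χ : 𝔼 d → Fin r} (h : HasRainbowCopy χ K) : K.encard ≤ r := by
  obtain ⟨f, -, hrainbow⟩ := h
  have hinj : InjOn (χ ∘ f) K := fun x hx y hy hxy =>
    by_contra fun hne => hrainbow x hx y hy hne hxy
  rw [← hinj.encard_image]
  simpa using ((χ ∘ f) '' K).encard_le_card

lemma IsRamseyConfig.isGallaiRamseyConfig (h : IsRamseyConfig K) : IsGallaiRamseyConfig K :=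
  fun r hr => (h r hr).imp fun _ hd χ => Or.inl (hd χ)

end Copies

section Simplex

lemma EuclideanSpace.dist_single_single_of_ne {ι : Type*} [Fintype ι] [DecidableEq ι]
    {i j : ι} (hij : i ≠ j) (c : ℝ) :
    dist (EuclideanSpace.single i c) (EuclideanSpace.single j c) = √2 * |c| := by
  have horth : inner ℝ (EuclideanSpace.single i c) (EuclideanSpace.single j c) = 0 := by
    simp [EuclideanSpace.inner_single_left, hij.symm]
  rw [dist_eq_norm, ← Real.sqrt_sq (norm_nonneg _), norm_sub_sq_real, horth,
    PiLp.norm_single, PiLp.norm_single, Real.norm_eq_abs, sq_abs,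
    show c ^ 2 - 2 * 0 + c ^ 2 = 2 * c ^ 2 by ring, Real.sqrt_mul zero_le_two, Real.sqrt_sq_eq_abs]

variable {s d : ℕ} {a : ℝ}

lemma isCongruentCopy_simplexVertices {ι : Fin s → Fin d} (hι : ι.Injective) {f : 𝔼 s → 𝔼 d}
    (hf : ∀ i, f (EuclideanSpace.single i (a / √2)) = EuclideanSpace.single (ι i) (a / √2)) :
    IsCongruentCopy (simplexVertices s a) f := by
  rintro _ ⟨i, rfl⟩ _ ⟨j, rfl⟩
  rw [hf, hf]
  rcases eq_or_ne i j with rfl | hij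
  · simp
  · rw [EuclideanSpace.dist_single_single_of_ne hij,
      EuclideanSpace.dist_single_single_of_ne (hι.ne hij)]

lemma encard_simplexVertices (ha : a ≠ 0) : (simplexVertices s a).encard = s := by
  have hinj : (fun i : Fin s => EuclideanSpace.single i (a / √2)).Injective := fun i j hij => by
    by_contra hne
    have hdist := EuclideanSpace.dist_single_single_of_ne hne (a / √2)
    simp only at hij
    rw [hij, dist_self] at hdist
    exact absurd hdist.symm (by positivity)
  rw [simplexVertices, ← image_univ, hinj.encard_image, encard_univ]
  simp

lemma isRamseyConfig_simplexVertices (s : ℕ) (a : ℝ) : IsRamseyConfig (simplexVertices s a) := by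
  intro r hr
  have : Nonempty (Fin r) := Fin.pos_iff_nonempty.1 hr
  refine ⟨r * s, fun χ => ?_⟩
  set c := a / √2
  obtain ⟨col, hcol⟩ := Fintype.exists_le_card_fiber_of_mul_le_card
    (fun k : Fin (r * s) => χ (EuclideanSpace.single k c)) (n := s) (by simp)
  obtain ⟨t, hts, hcard⟩ := Finset.exists_subset_card_eq hcol
  let ι := t.orderEmbOfFin hcard
  have hcolι : ∀ i, χ (EuclideanSpace.single (ι i) c) = col := fun i => by
    simpa using hts (t.orderEmbOfFin_mem hcard i)
  set f : 𝔼 s → 𝔼 (r * s) := fun x => ∑ i, EuclideanSpace.single (ι i) (x i)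
  have hf : ∀ i, f (EuclideanSpace.single i c) = EuclideanSpace.single (ι i) c := fun i => by
    rw [show f _ = _ from Finset.sum_eq_single i (fun j _ hj => ?_) (by simp)]
    · simp
    · ext k
      simp [PiLp.single_apply, hj]
  refine ⟨f, isCongruentCopy_simplexVertices ι.injective hf, col, ?_⟩
  rintro _ ⟨i, rfl⟩
  rw [hf, hcolι]

end Simplex

lemma exists_finite_of_forall_hasMonoCopy {m d r : ℕ} {K : Set (𝔼 m)} (hK : K.Finite)
    (h : ∀ χ : 𝔼 d → Fin r, HasMonoCopy χ K) :
    ∃ Y : Set (𝔼 d), Y.Finite ∧ ∀ χ : 𝔼 d → Fin r,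
      ∃ f, IsCongruentCopy K f ∧ MapsTo f K Y ∧ ∃ col, ∀ x ∈ K, χ (f x) = col := by
  have := hK.to_subtype
  -- whether `f` is monochromatic for `χ` depends only on the finitely many values `χ (f x)`
  let monoFor (f : {f : 𝔼 m → 𝔼 d // IsCongruentCopy K f}) : Set (𝔼 d → Fin r) :=
    (fun χ (x : K) => χ (f.1 x)) ⁻¹' {c | ∃ col, ∀ x, c x = col}
  have hopen : ∀ f, IsOpen (monoFor f) := fun f =>
    (isOpen_discrete _).preimage (continuous_pi fun x : K => continuous_apply (f.1 x))
  obtain ⟨t, ht⟩ := isCompact_univ.elim_finite_subcover monoFor hopen fun χ _ => by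
    obtain ⟨f, hf, col, hcol⟩ := h χ
    exact mem_iUnion.2 ⟨⟨f, hf⟩, col, fun x => hcol x x.2⟩
  refine ⟨⋃ f ∈ t, f.1 '' K, t.finite_toSet.biUnion fun f _ => hK.image f.1, fun χ => ?_⟩
  obtain ⟨f, hft, col, hcol⟩ := mem_iUnion₂.1 (ht (mem_univ χ))
  exact ⟨f.1, f.2, fun x hx => mem_biUnion hft (mem_image_of_mem _ hx), col,
    fun x hx => hcol ⟨x, hx⟩⟩

section Product

variable {a b m₁ m₂ d₁ d₂ d r : ℕ}

/-- `E^a` carries the first `a` coordinates of `E^{a+b}`, `E^b` the last `b`. -/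
noncomputable def finAddEquivProdL2 (a b : ℕ) :
    𝔼 (a + b) ≃ₗᵢ[ℝ] WithLp 2 (𝔼 a × 𝔼 b) :=
  (LinearIsometryEquiv.piLpCongrLeft 2 ℝ ℝ finSumFinEquiv.symm).trans
    (PiLp.sumPiLpEquivProdLpPiLp 2 _)

noncomputable def glue (x : 𝔼 a) (y : 𝔼 b) : 𝔼 (a + b) :=
  (finAddEquivProdL2 a b).symm (WithLp.toLp 2 (x, y))

@[simp]
lemma finAddEquivProdL2_glue (x : 𝔼 a) (y : 𝔼 b) :
    finAddEquivProdL2 a b (glue x y) = WithLp.toLp 2 (x, y) :=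
  LinearIsometryEquiv.apply_symm_apply _ _

lemma dist_glue (x x' : 𝔼 a) (y y' : 𝔼 b) :
    dist (glue x y) (glue x' y') = √(dist x x' ^ 2 + dist y y' ^ 2) := by
  rw [← (finAddEquivProdL2 a b).dist_map, finAddEquivProdL2_glue, finAddEquivProdL2_glue,
    WithLp.prod_dist_eq_of_L2]
  rfl

lemma isometry_glue_left (y : 𝔼 b) : Isometry fun x : 𝔼 a => glue x y :=
  Isometry.of_dist_eq fun x x' => by simp [dist_glue, Real.sqrt_sq dist_nonneg]

lemma isometry_glue_right (x : 𝔼 a) : Isometry (glue (b := b) x) :=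
  Isometry.of_dist_eq fun y y' => by simp [dist_glue, Real.sqrt_sq dist_nonneg]

variable {K₁ : Set (𝔼 m₁)} {K₂ : Set (𝔼 m₂)}

lemma mem_cartesianProd {z : 𝔼 (m₁ + m₂)} :
    z ∈ cartesianProd K₁ K₂ ↔
      (finAddEquivProdL2 m₁ m₂ z).fst ∈ K₁ ∧ (finAddEquivProdL2 m₁ m₂ z).snd ∈ K₂ := by
  constructor
  · rintro ⟨x, hx, y, hy, hzx, hzy⟩
    have hx' : (finAddEquivProdL2 m₁ m₂ z).fst = x := PiLp.ext hzx
    have hy' : (finAddEquivProdL2 m₁ m₂ z).snd = y := PiLp.ext hzy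
    exact ⟨hx' ▸ hx, hy' ▸ hy⟩
  · rintro ⟨hx, hy⟩
    exact ⟨_, hx, _, hy, fun _ => rfl, fun _ => rfl⟩

lemma glue_mem_cartesianProd {x : 𝔼 m₁} {y : 𝔼 m₂} (hx : x ∈ K₁) (hy : y ∈ K₂) :
    glue x y ∈ cartesianProd K₁ K₂ :=
  mem_cartesianProd.2 (by simpa using ⟨hx, hy⟩)

lemma IsCongruentCopy.prodMap {f₁ : 𝔼 m₁ → 𝔼 d₁} {f₂ : 𝔼 m₂ → 𝔼 d₂}
    (hf₁ : IsCongruentCopy K₁ f₁) (hf₂ : IsCongruentCopy K₂ f₂) :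
    IsCongruentCopy (cartesianProd K₁ K₂) fun z =>
      glue (f₁ (finAddEquivProdL2 m₁ m₂ z).fst) (f₂ (finAddEquivProdL2 m₁ m₂ z).snd) := by
  intro z hz z' hz'
  rw [mem_cartesianProd] at hz hz'
  rw [dist_glue, hf₁ _ hz.1 _ hz'.1, hf₂ _ hz.2 _ hz'.2, ← WithLp.prod_dist_eq_of_L2,
    LinearIsometryEquiv.dist_map]

lemma HasMonoCopy.of_cartesianProd {χ : 𝔼 d → Fin r} {y : 𝔼 m₂} (hy : y ∈ K₂)
    (h : HasMonoCopy χ (cartesianProd K₁ K₂)) : HasMonoCopy χ K₁ :=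
  h.of_isCongruentCopy (isometry_glue_left y).isCongruentCopy
    fun _ hx => glue_mem_cartesianProd hx hy

lemma encard_le_encard_cartesianProd {x : 𝔼 m₁} (hx : x ∈ K₁) :
    K₂.encard ≤ (cartesianProd K₁ K₂).encard := by
  rw [← (isometry_glue_right x).injective.encard_image K₂]
  exact encard_le_encard (image_subset_iff.2 fun _ hy => glue_mem_cartesianProd hx hy)

lemma IsRamseyConfig.cartesianProd (h₁ : IsRamseyConfig K₁) (h₂ : IsRamseyConfig K₂)
    (hK₁ : K₁.Nonempty) (hK₂ : K₂.Finite) :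
    IsRamseyConfig (cartesianProd K₁ K₂) := by
  intro r hr
  obtain ⟨d₂, hd₂⟩ := h₂ r hr
  obtain ⟨Y, hY, hYmono⟩ := exists_finite_of_forall_hasMonoCopy hK₂ hd₂
  have := hY.fintype
  have : Nonempty (Fin r) := Fin.pos_iff_nonempty.1 hr
  let e := Fintype.equivFin (Y → Fin r)
  obtain ⟨d₁, hd₁⟩ := h₁ (Fintype.card (Y → Fin r)) Fintype.card_pos
  refine ⟨d₁ + d₂, fun χ => ?_⟩
  -- colour `u ∈ E^{d₁}` by the colouring that `χ` induces on `{u} × Y`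
  obtain ⟨f₁, hf₁, _, hmono₁⟩ := hd₁ fun u => e fun y => χ (glue u y)
  obtain ⟨x₀, hx₀⟩ := hK₁
  obtain ⟨f₂, hf₂, hmaps, col, hmono₂⟩ := hYmono fun v => χ (glue (f₁ x₀) v)
  refine ⟨_, hf₁.prodMap hf₂, col, fun z hz => ?_⟩
  rw [mem_cartesianProd] at hz
  have hsame : (fun y : Y => χ (glue (f₁ (finAddEquivProdL2 m₁ m₂ z).fst) y)) =
      fun y : Y => χ (glue (f₁ x₀) y) :=
    e.injective ((hmono₁ _ hz.1).trans (hmono₁ x₀ hx₀).symm)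
  exact (congrFun hsame ⟨_, hmaps hz.2⟩).trans (hmono₂ _ hz.2)

end Product

/-- The Cartesian product of any two Gallai-Ramsey configurations is Gallai-Ramsey if and only
if every Gallai-Ramsey configuration is Ramsey. (Configurations are finite nonempty point sets
in some Euclidean space.) -/
theorem gallai_ramsey_product_iff_gallai_ramsey_imp_ramsey :
    (∀ (m₁ m₂ : ℕ) (K₁ : Set (EuclideanSpace ℝ (Fin m₁)))
        (K₂ : Set (EuclideanSpace ℝ (Fin m₂))),
        K₁.Finite → K₁.Nonempty → K₂.Finite → K₂.Nonempty →
        IsGallaiRamseyConfig K₁ → IsGallaiRamseyConfig K₂ →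
        IsGallaiRamseyConfig (cartesianProd K₁ K₂)) ↔
    (∀ (m : ℕ) (K : Set (EuclideanSpace ℝ (Fin m))),
        K.Finite → K.Nonempty → IsGallaiRamseyConfig K → IsRamseyConfig K) := by
  constructor
  · intro hprod m K hKf hKn hK r hr
    let S := simplexVertices (r + 1) 1
    obtain ⟨d, hd⟩ := hprod m (r + 1) K S hKf hKn (finite_range _) ⟨_, 0, rfl⟩ hK
      (isRamseyConfig_simplexVertices (r + 1) 1).isGallaiRamseyConfig r hr
    obtain ⟨x₀, hx₀⟩ := hKn
    refine ⟨d, fun χ =>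
      ((hd χ).resolve_right fun hrainbow => ?_).of_cartesianProd (mem_range_self 0)⟩
    have hcard : ((r + 1 : ℕ) : ℕ∞) ≤ r :=
      (encard_simplexVertices one_ne_zero).symm.le.trans
        ((encard_le_encard_cartesianProd hx₀).trans hrainbow.encard_le)
    norm_cast at hcard
    omega
  · intro himp m₁ m₂ K₁ K₂ hK₁f hK₁n hK₂f hK₂n hK₁ hK₂
    exact ((himp _ _ hK₁f hK₁n hK₁).cartesianProd (himp _ _ hK₂f hK₂n hK₂) hK₁n
      hK₂f).isGallaiRamseyConfig
end
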